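/- arXiv:1105.2845 — 2 statements merged into one kernel-verified Lean document; each statement's English description precedes it below -/
import Mathlib

section
/- Let f : c₀ → c₀ be defined by f(x)_n = √|x_n| + 1/(n+1), and for an infinite subset N = {n₁ < n₂ < ...} of ℕ define the spreading Nf : c₀ → c₀ by (Nf)(x) = Σ_k (√|x_{n_k}| + 1/(n_k+1)) e_{n_k}. Then for any (a_i) ∈ ℓ₁ and any partition of ℕ into infinite pairwise disjoint sets (N_i), the series Σ_i a_i · (N_i f)(x) converges in c₀ for each x ∈ c₀, and the resulting map x ↦ Σ_i a_i (N_i f)(x) is continuous on c₀. -/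
/-!
Coordinatewise, `|√s - √t| ≤ √|s - t|` and the shift `1/(n+1)` cancels in differences, so every
spreading satisfies `‖g x‖ ≤ √‖x‖ + 1` and `‖g x - g y‖ ≤ √‖x - y‖`. An `ℓ¹`-combination of such
maps converges absolutely in `c₀`, and its sum is `½`-Hölder with constant `∑ |aᵢ|`, hence continuous.
-/

open ZeroAtInfty

theorem Real.abs_sqrt_sub_sqrt_le (a b : ℝ) : |√a - √b| ≤ √|a - b| := by
  wlog hba : b ≤ a generalizing a b
  · rw [abs_sub_comm, abs_sub_comm a]
    exact this b a (le_of_not_ge hba)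
  have hsub : √a ≤ √(a - b) + √b := by
    rcases le_total b 0 with hb | hb
    · rw [Real.sqrt_eq_zero'.2 hb, add_zero]
      exact Real.sqrt_le_sqrt (by linarith)
    · rw [Real.sqrt_le_iff]
      refine ⟨by positivity, ?_⟩
      nlinarith [Real.sq_sqrt (sub_nonneg.2 hba), Real.sq_sqrt hb,
        Real.sqrt_nonneg (a - b), Real.sqrt_nonneg b]
  rw [abs_of_nonneg (sub_nonneg.2 hba), abs_of_nonneg (sub_nonneg.2 (Real.sqrt_le_sqrt hba))]
  linarith

theorem continuous_of_dist_le_mul_sqrt {X Y : Type*} [PseudoMetricSpace X] [PseudoMetricSpace Y]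
    {f : X → Y} (C : ℝ) (h : ∀ x y, dist (f x) (f y) ≤ C * √(dist x y)) : Continuous f := by
  refine continuous_iff_continuousAt.2 fun x => tendsto_iff_dist_tendsto_zero.2 ?_
  refine squeeze_zero (fun _ => dist_nonneg) (fun y => h y x) ?_
  simpa using (by fun_prop : Continuous fun y => C * √(dist y x)).tendsto x

section SmulSeries

variable {ι 𝕜 E : Type*} [NormedField 𝕜] [NormedAddCommGroup E] [NormedSpace 𝕜 E]
  {a : ι → 𝕜} {v : ι → E} {C : ℝ}

theorem summable_smul_of_norm_le [CompleteSpace E] (ha : Summable fun i => ‖a i‖)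
    (hv : ∀ i, ‖v i‖ ≤ C) : Summable fun i => a i • v i :=
  .of_norm_bounded (ha.mul_right C) fun i => by
    rw [norm_smul]; exact mul_le_mul_of_nonneg_left (hv i) (norm_nonneg _)

theorem norm_tsum_smul_le (ha : Summable fun i => ‖a i‖) (hv : ∀ i, ‖v i‖ ≤ C) :
    ‖∑' i, a i • v i‖ ≤ (∑' i, ‖a i‖) * C :=
  tsum_of_norm_bounded (ha.hasSum.mul_right C) fun i => by
    rw [norm_smul]; exact mul_le_mul_of_nonneg_left (hv i) (norm_nonneg _)

end SmulSeries

namespace ZeroAtInftyContinuousMap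

variable {α β : Type*} [TopologicalSpace α] [SeminormedAddCommGroup β]

theorem norm_le_of_forall_le {f : C₀(α, β)} {C : ℝ} (hC : 0 ≤ C) (h : ∀ x, ‖f x‖ ≤ C) :
    ‖f‖ ≤ C := by
  rw [← norm_toBCF_eq_norm]
  exact (BoundedContinuousFunction.norm_le hC).2 h

theorem norm_apply_le_norm (f : C₀(α, β)) (x : α) : ‖f x‖ ≤ ‖f‖ := by
  rw [← norm_toBCF_eq_norm]
  exact f.toBCF.norm_coe_le_norm x

end ZeroAtInftyContinuousMap

section Spreading

open ZeroAtInftyContinuousMap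

variable {N : Set ℕ} {b : ℕ → ℝ} {G : C₀(ℕ, ℝ) → C₀(ℕ, ℝ)}

theorem norm_spreading_le (hb : ∀ m, |b m| ≤ 1)
    (hG : ∀ x n, G x n = N.indicator (fun m => √|x m| + b m) n) (x : C₀(ℕ, ℝ)) :
    ‖G x‖ ≤ √‖x‖ + 1 := by
  refine norm_le_of_forall_le (by positivity) fun n => ?_
  rw [hG]
  refine (norm_indicator_le_norm_self _ _).trans
    ((norm_add_le _ _).trans (add_le_add ?_ ((Real.norm_eq_abs _).trans_le (hb n))))
  rw [Real.norm_of_nonneg (Real.sqrt_nonneg _)]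
  exact Real.sqrt_le_sqrt (norm_apply_le_norm x n)

theorem norm_spreading_sub_le
    (hG : ∀ x n, G x n = N.indicator (fun m => √|x m| + b m) n) (x y : C₀(ℕ, ℝ)) :
    ‖G x - G y‖ ≤ √‖x - y‖ := by
  refine norm_le_of_forall_le (Real.sqrt_nonneg _) fun n => ?_
  rw [ZeroAtInftyContinuousMap.sub_apply, hG, hG, ← Pi.sub_apply, ← Set.indicator_sub']
  refine (norm_indicator_le_norm_self _ _).trans ?_
  calc ‖√|x n| + b n - (√|y n| + b n)‖ = |(√|x n| - √|y n|)| := by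
        rw [add_sub_add_right_eq_sub, Real.norm_eq_abs]
    _ ≤ √|(|x n| - |y n|)| := Real.abs_sqrt_sub_sqrt_le _ _
    _ ≤ √|x n - y n| := Real.sqrt_le_sqrt (abs_abs_sub_abs_le_abs_sub _ _)
    _ ≤ √‖x - y‖ := Real.sqrt_le_sqrt (norm_apply_le_norm (x - y) n)

end Spreading

theorem stmt6_general (N : ℕ → Set ℕ)
    (g : ℕ → ZeroAtInftyContinuousMap ℕ ℝ → ZeroAtInftyContinuousMap ℕ ℝ)
    (hg : ∀ (i : ℕ) (x : ZeroAtInftyContinuousMap ℕ ℝ) (n : ℕ),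
      g i x n = Set.indicator (N i) (fun m => Real.sqrt |x m| + 1 / ((m : ℝ) + 1)) n)
    (a : ℕ → ℝ) (ha : Summable fun i => |a i|) :
    ∃ S : ZeroAtInftyContinuousMap ℕ ℝ → ZeroAtInftyContinuousMap ℕ ℝ,
      Continuous S ∧ ∀ x, HasSum (fun i => a i • g i x) (S x) := by
  have hb : ∀ m : ℕ, |1 / ((m : ℝ) + 1)| ≤ 1 := fun m => by
    rw [abs_of_pos (by positivity), div_le_one (by positivity)]
    linarith [m.cast_nonneg (α := ℝ)]
  have hsum x : Summable fun i => a i • g i x :=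
    summable_smul_of_norm_le ha fun i => norm_spreading_le hb (hg i) x
  refine ⟨fun x => ∑' i, a i • g i x, continuous_of_dist_le_mul_sqrt (∑' i, |a i|) fun x y => ?_,
    fun x => (hsum x).hasSum⟩
  rw [dist_eq_norm, dist_eq_norm, ← (hsum x).tsum_sub (hsum y), tsum_congr fun i => (smul_sub (a i) (g i x) (g i y)).symm]
  exact norm_tsum_smul_le ha fun i => norm_spreading_sub_le (hg i) x y

/-- For a partition of `ℕ` into infinite pairwise disjoint sets `N i`, the
spreadings `g i` of Dieudonné's field (coordinate `n` of `g i x` equals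
`√|x_n| + 1/(n+1)` if `n ∈ N i` and `0` otherwise) and any `(a_i) ∈ ℓ₁`, the
series `Σ_i a_i • g i x` converges in `c₀` for each `x`, and the resulting map
is continuous. -/
theorem stmt6 (N : ℕ → Set ℕ) (hinf : ∀ i, (N i).Infinite)
    (hdisj : Pairwise (Function.onFun Disjoint N)) (hcov : (⋃ i, N i) = Set.univ)
    (g : ℕ → ZeroAtInftyContinuousMap ℕ ℝ → ZeroAtInftyContinuousMap ℕ ℝ)
    (hg : ∀ (i : ℕ) (x : ZeroAtInftyContinuousMap ℕ ℝ) (n : ℕ),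
      g i x n = Set.indicator (N i) (fun m => Real.sqrt |x m| + 1 / ((m : ℝ) + 1)) n)
    (a : ℕ → ℝ) (ha : Summable fun i => |a i|) :
    ∃ S : ZeroAtInftyContinuousMap ℕ ℝ → ZeroAtInftyContinuousMap ℕ ℝ,
      Continuous S ∧ ∀ x, HasSum (fun i => a i • g i x) (S x) :=
  stmt6_general N g hg a ha
end

section
/- Let X be an infinite-dimensional Banach space. Then c₀(X) \ ⋃_{p>0} ℓ_p(X) together with 0 contains a closed subspace of c₀(X) of dimension dim c₀(X) = dim X. -/
/-!
Fix the scalar sequence `a n = 1 / log (n + 2)` and embed `X` into `c₀(X)` by `x ↦ (a n • x)ₙ`.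
Since `a → 0`, the image lies in `c₀(X)`; since `a ^ q ≥ c_q / (n + 2)` for every `q > 0`
(from `log x ≤ q x^{1/q}`), no nonzero image lies in any `ℓ_q(X)`; and since `a 0 ≠ 0`, the
image is `{f | ∀ n, f n = (a n / a 0) • f 0}`, which is closed even for pointwise convergence.
-/

open Filter Topology

lemma tendsto_inv_log_nat_add_two :
    Tendsto (fun n : ℕ => (Real.log (n + 2))⁻¹) atTop (𝓝 0) :=
  (Real.tendsto_log_atTop.comp
    (tendsto_atTop_add_const_right _ 2 tendsto_natCast_atTop_atTop)).inv_tendsto_atTop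

lemma not_summable_inv_log_nat_add_two_rpow {q : ℝ} (hq : 0 < q) :
    ¬ Summable fun n : ℕ => (Real.log (n + 2))⁻¹ ^ q := by
  intro hsum
  have hharmonic : ¬ Summable fun n : ℕ => 1 / |(n : ℝ) + 2| ^ (1 : ℝ) :=
    fun h => (lt_irrefl _ ((Real.summable_one_div_nat_add_rpow 2 1).1 h))
  refine hharmonic ((hsum.mul_left (q ^ q)).of_nonneg_of_le (fun n => by positivity) fun n => ?_)
  have hn : (0 : ℝ) < n + 2 := by positivity
  have hlog : 0 < Real.log (n + 2) := Real.log_pos (by linarith [n.cast_nonneg (α := ℝ)])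
  have hlog_le : Real.log (n + 2) ^ q ≤ q ^ q * (n + 2) := by
    calc Real.log (n + 2) ^ q ≤ ((n + 2) ^ q⁻¹ / q⁻¹) ^ q := by
          gcongr
          simpa only [one_div] using Real.log_le_rpow_div hn.le (inv_pos.2 hq)
      _ = q ^ q * (n + 2) := by
          rw [div_inv_eq_mul, Real.mul_rpow (by positivity) hq.le, ← Real.rpow_mul hn.le,
            inv_mul_cancel₀ hq.ne', Real.rpow_one, mul_comm]
  rw [abs_of_pos hn, Real.rpow_one, Real.inv_rpow hlog.le, ← div_eq_mul_inv,
    div_le_div_iff₀ hn (by positivity), one_mul]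
  exact hlog_le

section SmulSeq

variable {𝕜 X : Type*} [NormedField 𝕜] [NormedAddCommGroup X] [NormedSpace 𝕜 X]

def smulSeq (a : ℕ → 𝕜) : X →ₗ[𝕜] ℕ → X := LinearMap.pi fun n => a n • LinearMap.id

@[simp]
lemma smulSeq_apply (a : ℕ → 𝕜) (x : X) (n : ℕ) : smulSeq a x n = a n • x := rfl

variable {a : ℕ → 𝕜}

lemma smulSeq_injective (ha : a 0 ≠ 0) : Function.Injective (smulSeq (X := X) a) :=
  fun _ _ h => smul_right_injective X ha (congrFun h 0)

lemma range_smulSeq (ha : a 0 ≠ 0) :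
    (LinearMap.range (smulSeq (X := X) a) : Set (ℕ → X)) =
      {f | f = fun n => (a n * (a 0)⁻¹) • f 0} := by
  ext f
  constructor
  · rintro ⟨x, rfl⟩
    funext n
    simp only [smulSeq_apply, smul_smul, mul_assoc, inv_mul_cancel₀ ha, mul_one]
  · intro hf
    exact ⟨(a 0)⁻¹ • f 0, funext fun n => by
      simpa only [smulSeq_apply, smul_smul] using (congrFun hf n).symm⟩

lemma isClosed_range_smulSeq (ha : a 0 ≠ 0) :
    IsClosed (LinearMap.range (smulSeq (X := X) a) : Set (ℕ → X)) := by
  rw [range_smulSeq ha]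
  exact isClosed_eq continuous_id (continuous_pi fun n => (continuous_apply 0).const_smul _)

lemma tendsto_norm_smulSeq (ha : Tendsto a atTop (𝓝 0)) (x : X) :
    Tendsto (fun n => ‖smulSeq a x n‖) atTop (𝓝 0) := by
  simpa using (ha.smul_const x).norm

lemma not_summable_norm_smulSeq_rpow {q : ℝ} (ha : ¬ Summable fun n => ‖a n‖ ^ q)
    {x : X} (hx : x ≠ 0) : ¬ Summable fun n => ‖smulSeq a x n‖ ^ q := by
  have hxq : ‖x‖ ^ q ≠ 0 := (Real.rpow_pos_of_pos (norm_pos_iff.2 hx) q).ne'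
  simpa only [smulSeq_apply, norm_smul, Real.mul_rpow (norm_nonneg _) (norm_nonneg _),
    summable_mul_right_iff hxq] using ha

end SmulSeq

lemma bddAbove_range_norm_sub {X : Type*} [SeminormedAddCommGroup X] {f g : ℕ → X}
    (hf : Tendsto (fun n => ‖f n‖) atTop (𝓝 0)) (hg : Tendsto (fun n => ‖g n‖) atTop (𝓝 0)) :
    BddAbove (Set.range fun n => ‖f n - g n‖) := by
  have hfg : Tendsto (fun n => ‖f n‖ + ‖g n‖) atTop (𝓝 0) := by simpa using hf.add hg
  exact (squeeze_zero (fun _ => norm_nonneg _) (fun _ => norm_sub_le _ _) hfg).bddAbove_range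

lemma tendsto_pi_nhds_of_tendsto_iSup_norm_sub {ι κ X : Type*} [SeminormedAddCommGroup X]
    {l : Filter κ} {F : κ → ι → X} {z : ι → X}
    (hbdd : ∀ k, BddAbove (Set.range fun n => ‖F k n - z n‖))
    (hF : Tendsto (fun k => ⨆ n, ‖F k n - z n‖) l (𝓝 0)) : Tendsto F l (𝓝 z) :=
  tendsto_pi_nhds.2 fun n => tendsto_iff_norm_sub_tendsto_zero.2 <|
    squeeze_zero (fun _ => norm_nonneg _) (fun k => le_ciSup (hbdd k) n) hF

theorem stmt13_general (X : Type*) [NormedAddCommGroup X] [NormedSpace ℝ X] :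
    ∃ S : Submodule ℝ (ℕ → X),
      (∀ f ∈ S, Tendsto (fun n => ‖f n‖) atTop (𝓝 0)) ∧
      Module.rank ℝ S = Module.rank ℝ X ∧
      (∀ f ∈ S, f ≠ 0 → ∀ q : ℝ, 0 < q → ¬ Summable fun n => ‖f n‖ ^ q) ∧
      (∀ z : ℕ → X, Tendsto (fun n => ‖z n‖) atTop (𝓝 0) →
        (∃ F : ℕ → ℕ → X, (∀ k, F k ∈ S) ∧
          Tendsto (fun k => ⨆ n, ‖F k n - z n‖) atTop (𝓝 0)) → z ∈ S) := by
  set a : ℕ → ℝ := fun n => (Real.log (n + 2))⁻¹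
  have ha0 : a 0 ≠ 0 := by
    simpa [a] using (Real.log_pos (by norm_num : (1 : ℝ) < 2)).ne'
  have hc₀ : ∀ f ∈ LinearMap.range (smulSeq (X := X) a),
      Tendsto (fun n => ‖f n‖) atTop (𝓝 0) := by
    rintro _ ⟨x, rfl⟩
    exact tendsto_norm_smulSeq tendsto_inv_log_nat_add_two x
  refine ⟨LinearMap.range (smulSeq a), hc₀, rank_range_of_injective _ (smulSeq_injective ha0),
    ?_, ?_⟩
  · rintro _ ⟨x, rfl⟩ hf q hq
    refine not_summable_norm_smulSeq_rpow ?_ (fun hx => hf (by rw [hx, map_zero]))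
    have hpos (n : ℕ) : 0 ≤ a n :=
      inv_nonneg.2 (Real.log_nonneg (by linarith [n.cast_nonneg (α := ℝ)]))
    simpa only [Real.norm_of_nonneg (hpos _)] using not_summable_inv_log_nat_add_two_rpow hq
  · rintro z hz ⟨F, hFS, hF⟩
    have hbdd k := bddAbove_range_norm_sub (hc₀ _ (hFS k)) hz
    exact (isClosed_range_smulSeq ha0).mem_of_tendsto
      (tendsto_pi_nhds_of_tendsto_iSup_norm_sub hbdd hF) (Eventually.of_forall hFS)

/-- For an infinite-dimensional Banach space `X`, the set
`c₀(X) \ ⋃_{p>0} ℓ_p(X)` together with `0` contains a closed (sequentially,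
for the sup norm) subspace of `c₀(X)` of dimension `dim c₀(X) = dim X`. -/
theorem stmt13 (X : Type*) [NormedAddCommGroup X] [NormedSpace ℝ X]
    [CompleteSpace X] (hX : ¬ FiniteDimensional ℝ X) :
    ∃ S : Submodule ℝ (ℕ → X),
      (∀ f ∈ S, Tendsto (fun n => ‖f n‖) atTop (𝓝 0)) ∧
      Module.rank ℝ S = Module.rank ℝ X ∧
      (∀ f ∈ S, f ≠ 0 → ∀ q : ℝ, 0 < q → ¬ Summable fun n => ‖f n‖ ^ q) ∧
      (∀ z : ℕ → X, Tendsto (fun n => ‖z n‖) atTop (𝓝 0) →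
        (∃ F : ℕ → ℕ → X, (∀ k, F k ∈ S) ∧
          Tendsto (fun k => ⨆ n, ‖F k n - z n‖) atTop (𝓝 0)) → z ∈ S) :=
  stmt13_general X
end
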